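/- arXiv:1708.02087 — 3 statements merged into one kernel-verified Lean document; each statement's English description precedes it below -/
import Mathlib

section
/- Fano's inequality: let 𝒳, 𝒴 be finite sets, X, Y random variables valued in 𝒳, 𝒴, and f : 𝒴 → 𝒳 a function. Let P_e = P(X ≠ f(Y)). Then H(X|Y) ≤ H(P_e) + P_e · log|𝒳|, where H(p) = −p log p − (1−p) log(1−p). -/
open MeasureTheory Filter

/-- Shannon entropy of a finite-valued random variable. -/
noncomputable def finEnt {Ω 𝒳 : Type*} [MeasurableSpace Ω] [Fintype 𝒳]
    (P : MeasureTheory.Measure Ω) (X : Ω → 𝒳) : ℝ :=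
  -∑ x : 𝒳, (P {ω | X ω = x}).toReal * Real.log (P {ω | X ω = x}).toReal

/-- The binary entropy function `H(p) = -p log p - (1-p) log (1-p)`. -/
noncomputable def binEnt (p : ℝ) : ℝ := -(p * Real.log p) - (1 - p) * Real.log (1 - p)

/-!
Gibbs' inequality `∑ p log (r / p) ≤ ∑ r - ∑ p`, applied in each fibre `Y = y`, bounds
`H(X | Y)` by the cross-entropy `-∑ p(x, y) log c(x | y)` against any conditional
sub-probability `c`. For `c(x | y) = 1 - P_e` when `x = f y` and `P_e / |𝒳|` otherwise, that
cross-entropy is exactly `H(P_e) + P_e log |𝒳|`.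
-/

open Real Finset

theorem negMulLog_le_neg_mul_log_add_sub {p r : ℝ} (hp : 0 ≤ p) (hr : 0 ≤ r)
    (hpr : r = 0 → p = 0) : negMulLog p ≤ -(p * log r) + r - p := by
  rcases hp.eq_or_lt with rfl | hp
  · simpa using hr
  have hr : 0 < r := hr.lt_of_ne' fun h => hp.ne' (hpr h)
  have key : p * log (r / p) ≤ p * (r / p - 1) :=
    mul_le_mul_of_nonneg_left (log_le_sub_one_of_pos (div_pos hr hp)) hp.le
  rw [log_div hr.ne' hp.ne', mul_sub, mul_sub, mul_div_cancel₀ _ hp.ne'] at key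
  rw [negMulLog]
  linarith

theorem sum_negMulLog_le_neg_sum_mul_log {ι : Type*} {s : Finset ι} {p r : ι → ℝ}
    (hp : ∀ i ∈ s, 0 ≤ p i) (hr : ∀ i ∈ s, 0 ≤ r i) (hpr : ∀ i ∈ s, r i = 0 → p i = 0)
    (hsum : ∑ i ∈ s, r i ≤ ∑ i ∈ s, p i) :
    ∑ i ∈ s, negMulLog (p i) ≤ -∑ i ∈ s, p i * log (r i) :=
  calc ∑ i ∈ s, negMulLog (p i) ≤ ∑ i ∈ s, (-(p i * log (r i)) + r i - p i) :=
        sum_le_sum fun i hi => negMulLog_le_neg_mul_log_add_sub (hp i hi) (hr i hi) (hpr i hi)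
    _ ≤ -∑ i ∈ s, p i * log (r i) := by
        simp only [sum_sub_distrib, sum_add_distrib, sum_neg_distrib]
        linarith

theorem sum_negMulLog_sub_negMulLog_sum_le {ι : Type*} {s : Finset ι} {p c : ι → ℝ}
    (hp : ∀ i ∈ s, 0 ≤ p i) (hc : ∀ i ∈ s, 0 ≤ c i) (hpc : ∀ i ∈ s, c i = 0 → p i = 0)
    (hc1 : ∑ i ∈ s, c i ≤ 1) :
    ∑ i ∈ s, negMulLog (p i) - negMulLog (∑ i ∈ s, p i) ≤ -∑ i ∈ s, p i * log (c i) := by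
  set Q := ∑ i ∈ s, p i
  rcases (sum_nonneg hp).eq_or_lt with hQ | hQ
  · have hp0 : ∀ i ∈ s, p i = 0 := (sum_eq_zero_iff_of_nonneg hp).mp hQ.symm
    rw [show Q = 0 from hQ.symm, sum_eq_zero fun i hi => by rw [hp0 i hi, negMulLog_zero],
      sum_eq_zero fun i hi => by rw [hp0 i hi, zero_mul]]
    simp
  have hgibbs := sum_negMulLog_le_neg_sum_mul_log (r := fun i => c i * Q) hp
    (fun i hi => mul_nonneg (hc i hi) hQ.le)
    (fun i hi h => hpc i hi ((mul_eq_zero.mp h).resolve_right hQ.ne'))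
    (by rw [← sum_mul]; exact mul_le_of_le_one_left hQ.le hc1)
  have hsplit : ∑ i ∈ s, p i * log (c i * Q) = ∑ i ∈ s, p i * log (c i) + Q * log Q := by
    rw [sum_mul, ← sum_add_distrib]
    refine sum_congr rfl fun i hi => ?_
    rcases eq_or_ne (p i) 0 with h | h
    · simp [h]
    · rw [log_mul (fun h' => h (hpc i hi h')) hQ.ne']
      ring
  rw [hsplit] at hgibbs
  rw [negMulLog]
  linarith

theorem sum_negMulLog_sub_sum_negMulLog_marginal_le {α β : Type*} [Fintype α] [Fintype β]
    {p c : α × β → ℝ} (hp : ∀ z, 0 ≤ p z) (hc : ∀ z, 0 ≤ c z) (hpc : ∀ z, c z = 0 → p z = 0)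
    (hc1 : ∀ y, ∑ x, c (x, y) ≤ 1) :
    ∑ z, negMulLog (p z) - ∑ y, negMulLog (∑ x, p (x, y)) ≤ -∑ z, p z * log (c z) := by
  calc ∑ z, negMulLog (p z) - ∑ y, negMulLog (∑ x, p (x, y))
      = ∑ y, (∑ x, negMulLog (p (x, y)) - negMulLog (∑ x, p (x, y))) := by
        rw [Fintype.sum_prod_type_right, sum_sub_distrib]
    _ ≤ ∑ y, -∑ x, p (x, y) * log (c (x, y)) :=
        sum_le_sum fun y _ => sum_negMulLog_sub_negMulLog_sum_le (fun x _ => hp (x, y))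
          (fun x _ => hc (x, y)) (fun x _ => hpc (x, y)) (hc1 y)
    _ = -∑ z, p z * log (c z) := by rw [sum_neg_distrib, Fintype.sum_prod_type_right]

section FanoReference

variable {𝒳 𝒴 : Type*} [Fintype 𝒳] [DecidableEq 𝒳] (f : 𝒴 → 𝒳)

noncomputable def fanoReference (s : ℝ) (z : 𝒳 × 𝒴) : ℝ :=
  if z.1 = f z.2 then s else (1 - s) / Fintype.card 𝒳

theorem fanoReference_nonneg {s : ℝ} (hs0 : 0 ≤ s) (hs1 : s ≤ 1) (z : 𝒳 × 𝒴) :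
    0 ≤ fanoReference f s z := by
  unfold fanoReference
  split_ifs
  · exact hs0
  · exact div_nonneg (sub_nonneg.mpr hs1) (Nat.cast_nonneg _)

theorem sum_fanoReference_le_one {s : ℝ} (hs1 : s ≤ 1) (y : 𝒴) :
    ∑ x, fanoReference f s (x, y) ≤ 1 := by
  have hK : (0 : ℝ) < Fintype.card 𝒳 := Nat.cast_pos.mpr (Fintype.card_pos_iff.mpr ⟨f y⟩)
  have hshare : 0 ≤ (1 - s) / Fintype.card 𝒳 := div_nonneg (sub_nonneg.mpr hs1) hK.le
  calc ∑ x, fanoReference f s (x, y)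
      ≤ ∑ x, ((if x = f y then s else 0) + (1 - s) / Fintype.card 𝒳) := by
        refine sum_le_sum fun x _ => ?_
        unfold fanoReference
        split_ifs <;> linarith
    _ = 1 := by
        rw [sum_add_distrib, sum_ite_eq', if_pos (mem_univ _), sum_const, card_univ,
          nsmul_eq_mul, mul_div_cancel₀ _ hK.ne']
        ring

variable [Fintype 𝒴]

theorem sum_sub_sum_graph (p : 𝒳 × 𝒴 → ℝ) :
    ∑ z, p z - ∑ y, p (f y, y) = ∑ y, ∑ x ∈ univ.erase (f y), p (x, y) := by
  rw [Fintype.sum_prod_type_right, sub_eq_iff_eq_add', ← sum_add_distrib]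
  exact sum_congr rfl fun y _ => (add_sum_erase _ (fun x => p (x, y)) (mem_univ _)).symm

theorem eq_zero_of_fanoReference_eq_zero {p : 𝒳 × 𝒴 → ℝ} (hp : ∀ z, 0 ≤ p z)
    (hp1 : ∑ z, p z = 1) {z : 𝒳 × 𝒴} (h : fanoReference f (∑ y, p (f y, y)) z = 0) :
    p z = 0 := by
  obtain ⟨x, y⟩ := z
  refine le_antisymm ?_ (hp _)
  unfold fanoReference at h
  split_ifs at h with hx
  · dsimp only at hx
    subst hx
    exact h ▸ single_le_sum (f := fun y => p (f y, y)) (fun y _ => hp _) (mem_univ y)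
  · have : Nonempty 𝒳 := ⟨x⟩
    have hK : (Fintype.card 𝒳 : ℝ) ≠ 0 := Nat.cast_ne_zero.mpr Fintype.card_ne_zero
    rw [← (div_eq_zero_iff.mp h).resolve_right hK, ← hp1, sum_sub_sum_graph]
    exact (single_le_sum (fun x _ => hp (x, y)) (mem_erase.mpr ⟨hx, mem_univ x⟩)).trans
      (single_le_sum (f := fun y => ∑ x ∈ univ.erase (f y), p (x, y))
        (fun y _ => sum_nonneg fun x _ => hp _) (mem_univ y))

theorem neg_sum_mul_log_fanoReference {p : 𝒳 × 𝒴 → ℝ} (hp1 : ∑ z, p z = 1) :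
    -∑ z, p z * log (fanoReference f (∑ y, p (f y, y)) z) =
      binEnt (1 - ∑ y, p (f y, y)) + (1 - ∑ y, p (f y, y)) * log (Fintype.card 𝒳) := by
  set s := ∑ y, p (f y, y)
  have hK : (Fintype.card 𝒳 : ℝ) ≠ 0 := by
    obtain ⟨z, -, -⟩ := exists_ne_zero_of_sum_ne_zero (hp1.trans_ne one_ne_zero)
    have : Nonempty 𝒳 := ⟨z.1⟩
    exact Nat.cast_ne_zero.mpr Fintype.card_ne_zero
  have hfiber : ∀ y, ∑ x, p (x, y) * log (fanoReference f s (x, y)) =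
      p (f y, y) * log s +
        (∑ x ∈ univ.erase (f y), p (x, y)) * log ((1 - s) / Fintype.card 𝒳) := by
    intro y
    rw [← add_sum_erase _ _ (mem_univ (f y)), sum_mul]
    congr 1
    · simp [fanoReference]
    · exact sum_congr rfl fun x hx => by simp [fanoReference, (mem_erase.mp hx).1]
  have hlog : (1 - s) * log ((1 - s) / Fintype.card 𝒳) =
      (1 - s) * log (1 - s) - (1 - s) * log (Fintype.card 𝒳) := by
    rcases eq_or_ne (1 - s) 0 with h | h
    · simp [h]
    · rw [log_div h hK, mul_sub]
  rw [Fintype.sum_prod_type_right, sum_congr rfl fun y _ => hfiber y, sum_add_distrib,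
    ← sum_mul, ← sum_mul, ← sum_sub_sum_graph, hp1, hlog, binEnt, sub_sub_cancel]
  ring

end FanoReference

theorem fano_inequality_of_weights {𝒳 𝒴 : Type*} [Fintype 𝒳] [Fintype 𝒴] [DecidableEq 𝒳]
    (p : 𝒳 × 𝒴 → ℝ) (hp : ∀ z, 0 ≤ p z) (hp1 : ∑ z, p z = 1) (f : 𝒴 → 𝒳) :
    ∑ z, negMulLog (p z) - ∑ y, negMulLog (∑ x, p (x, y)) ≤
      binEnt (1 - ∑ y, p (f y, y)) + (1 - ∑ y, p (f y, y)) * log (Fintype.card 𝒳) := by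
  have hs0 : 0 ≤ ∑ y, p (f y, y) := sum_nonneg fun y _ => hp _
  have hs1 : ∑ y, p (f y, y) ≤ 1 := by
    rw [← sub_nonneg, ← hp1, sum_sub_sum_graph]
    exact sum_nonneg fun y _ => sum_nonneg fun x _ => hp _
  rw [← neg_sum_mul_log_fanoReference f hp1]
  exact sum_negMulLog_sub_sum_negMulLog_marginal_le hp (fanoReference_nonneg f hs0 hs1)
    (fun _ => eq_zero_of_fanoReference_eq_zero f hp hp1) (sum_fanoReference_le_one f hs1)

theorem finEnt_eq_sum_negMulLog {Ω α : Type*} [MeasurableSpace Ω] [Fintype α] (P : Measure Ω)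
    (X : Ω → α) : finEnt P X = ∑ x, negMulLog (P.real {ω | X ω = x}) := by
  simp [finEnt, negMulLog, measureReal_def, sum_neg_distrib]

theorem measureReal_eq_sum_measureReal_preimage_singleton_inter {Ω β : Type*} [MeasurableSpace Ω]
    [Fintype β] [MeasurableSpace β] [MeasurableSingletonClass β] (μ : Measure Ω)
    [IsFiniteMeasure μ] {g : Ω → β} (hg : Measurable g) (A : Set Ω) :
    μ.real A = ∑ b, μ.real (g ⁻¹' {b} ∩ A) := by
  have := sum_measureReal_preimage_singleton (μ := μ.restrict A) univ
    fun b _ => hg (measurableSet_singleton b)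
  simpa [measureReal_restrict_apply (hg (measurableSet_singleton _))] using this.symm

/-- Fano's inequality: `H(X|Y) ≤ H(P_e) + P_e log |𝒳|` where `P_e = ℙ(X ≠ f(Y))`
and `H(X|Y) = H(X,Y) - H(Y)`. -/
theorem fano_inequality {Ω 𝒳 𝒴 : Type*} [MeasurableSpace Ω]
    [Fintype 𝒳] [Fintype 𝒴] [MeasurableSpace 𝒳] [DiscreteMeasurableSpace 𝒳]
    [MeasurableSpace 𝒴] [DiscreteMeasurableSpace 𝒴]
    (P : Measure Ω) [IsProbabilityMeasure P] (X : Ω → 𝒳) (Y : Ω → 𝒴) (f : 𝒴 → 𝒳)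
    (hX : Measurable X) (hY : Measurable Y) :
    finEnt P (fun ω => (X ω, Y ω)) - finEnt P Y ≤
      binEnt (P {ω | X ω ≠ f (Y ω)}).toReal +
        (P {ω | X ω ≠ f (Y ω)}).toReal * Real.log (Fintype.card 𝒳) := by
  classical
  set p : 𝒳 × 𝒴 → ℝ := fun z => P.real {ω | (X ω, Y ω) = z}
  have hp1 : ∑ z, p z = 1 := by
    rw [← probReal_univ (μ := P),
      measureReal_eq_sum_measureReal_preimage_singleton_inter P (hX.prodMk hY)]
    simp only [Set.inter_univ]
    rfl
  have hmarginal : ∀ y, P.real {ω | Y ω = y} = ∑ x, p (x, y) := fun y => by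
    rw [measureReal_eq_sum_measureReal_preimage_singleton_inter P hX]
    congr! 2 with x
    ext ω
    simp [Prod.ext_iff]
  have herror : P.real {ω | X ω ≠ f (Y ω)} = 1 - ∑ y, p (f y, y) := by
    have hsuccess : MeasurableSet {ω | X ω = f (Y ω)} :=
      measurableSet_eq_fun hX (Measurable.of_discrete.comp hY)
    rw [show {ω | X ω ≠ f (Y ω)} = {ω | X ω = f (Y ω)}ᶜ from rfl,
      probReal_compl_eq_one_sub hsuccess,
      measureReal_eq_sum_measureReal_preimage_singleton_inter P hY]
    congr! 3 with y
    ext ω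
    simp only [Set.mem_inter_iff, Set.mem_preimage, Set.mem_singleton_iff, Set.mem_ofPred_eq,
      Prod.mk.injEq]
    grind
  rw [← measureReal_def, finEnt_eq_sum_negMulLog, finEnt_eq_sum_negMulLog, herror]
  simp only [hmarginal]
  exact fano_inequality_of_weights p (fun _ => measureReal_nonneg) hp1 f
end

section
/- Let (𝒳,d) be a compact metric space, ε > 0, D > 2, and S ⊂ 𝒳 a 2Dε-separated set (any two distinct points of S are at distance ≥ 2Dε). Let X, Y be 𝒳-valued random variables on a common probability space such that X is uniformly distributed over S and E(d(X,Y)) < ε. Then I(X;Y) ≥ (1 − 1/D)·log|S| − H(1/D), where H(p) is the binary entropy. -/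
/-!
Fano's inequality for a decoder. Enlarge the disjoint balls of radius `Dε` around the points of
`S` to a measurable partition `(C x)_{x ∈ S}` of `𝒳`, and decode `Y` to the `x` with `Y ∈ C x`.
By Markov's inequality the decoding is wrong with probability less than `E d(X,Y) / (Dε) < 1/D`.
Comparing the joint law of `X` and the decoded value with the reference law `p(z) q(x | z)`, where
`q` puts mass `1 - 1/D` on `x = z` and spreads `1/D` evenly over the other points, Gibbs'
inequality bounds the term of `I(X;Y)` for these two partitions from below by
`(1 - 1/D) log |S| - H(1/D)`. The supremum defining `I(X;Y)` is finite, since every pair of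
partitions gives at most `log |S|`: every cell that `X` charges has mass at least `1/|S|`.
-/

open MeasureTheory Filter

noncomputable def miSum {Ω 𝒳 𝒴 : Type*} [MeasurableSpace Ω]
    (P : Measure Ω) (X : Ω → 𝒳) (Y : Ω → 𝒴) (Pp : Finset (Set 𝒳)) (Qq : Finset (Set 𝒴)) : ℝ :=
  ∑ A ∈ Pp, ∑ B ∈ Qq,
    (P {ω | X ω ∈ A ∧ Y ω ∈ B}).toReal *
      Real.log ((P {ω | X ω ∈ A ∧ Y ω ∈ B}).toReal /
        ((P {ω | X ω ∈ A}).toReal * (P {ω | Y ω ∈ B}).toReal))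

/-- A finite measurable partition of a measurable space, given as a finite
collection of measurable, pairwise disjoint sets covering the space. -/
def IsFinPartition {α : Type*} [MeasurableSpace α] (Pp : Finset (Set α)) : Prop :=
  (∀ A ∈ Pp, MeasurableSet A) ∧
  (∀ A ∈ Pp, ∀ B ∈ Pp, A ≠ B → Disjoint A B) ∧
  (⋃ A ∈ Pp, A) = Set.univ

/-- The mutual information `I(X;Y)`: the supremum over all finite measurable
partitions `Pp` of `𝒳` and `Qq` of `𝒴` of
`∑_{P∈Pp,Q∈Qq} ℙ((X,Y)∈P×Q) log (ℙ((X,Y)∈P×Q) / (ℙ(X∈P)ℙ(Y∈Q)))`. -/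
noncomputable def mutualInfo {Ω 𝒳 𝒴 : Type*} [MeasurableSpace Ω] [MeasurableSpace 𝒳]
    [MeasurableSpace 𝒴] (P : Measure Ω) (X : Ω → 𝒳) (Y : Ω → 𝒴) : ℝ :=
  ⨆ pq : {pq : Finset (Set 𝒳) × Finset (Set 𝒴) // IsFinPartition pq.1 ∧ IsFinPartition pq.2},
    miSum P X Y pq.1.1 pq.1.2

open Real Set

section Gibbs

lemma sub_le_mul_log_div {a b : ℝ} (ha : 0 < a) (hb : 0 < b) : a - b ≤ a * log (a / b) := by
  have h := log_le_sub_one_of_pos (div_pos hb ha)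
  have hrev : log (a / b) = -log (b / a) := by rw [← log_inv, inv_div]
  have : a * (b / a) = b := mul_div_cancel₀ b ha.ne'
  rw [hrev]
  nlinarith [mul_le_mul_of_nonneg_left h ha.le]

lemma mul_log_add_sub_le_mul_log_div {a p q n : ℝ} (ha : 0 ≤ a) (hap : a ≤ p) (hq : 0 < q)
    (hn : 0 < n) : a * log (q * n) + (a - p * q) ≤ a * log (a / (1 / n * p)) := by
  rcases ha.eq_or_lt with rfl | ha
  · simp only [zero_mul, zero_sub, zero_add, neg_nonpos]
    positivity
  have hp : 0 < p := ha.trans_le hap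
  have hsplit : log (a / (1 / n * p)) = log (a / (p * q)) + log (q * n) := by
    rw [← log_mul (by positivity) (by positivity)]
    congr 1
    field_simp
  rw [hsplit, mul_add]
  linarith [sub_le_mul_log_div ha (mul_pos hp hq)]

/-- Gibbs' inequality against the reference weights `p z * q x z`, which have total mass at
most one. -/
lemma sum_sum_mul_log_le {ι : Type*} (S : Finset ι) (a q : ι → ι → ℝ) (p : ι → ℝ) {n : ℝ}
    (hn : 0 < n) (ha : ∀ x ∈ S, ∀ z ∈ S, 0 ≤ a x z) (hap : ∀ x ∈ S, ∀ z ∈ S, a x z ≤ p z)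
    (hq : ∀ x ∈ S, ∀ z ∈ S, 0 < q x z) (hqcol : ∀ z ∈ S, ∑ x ∈ S, q x z ≤ 1)
    (hsum : ∑ x ∈ S, ∑ z ∈ S, a x z = 1) (hp : ∑ z ∈ S, p z = 1) :
    ∑ x ∈ S, ∑ z ∈ S, a x z * log (q x z * n) ≤
      ∑ x ∈ S, ∑ z ∈ S, a x z * log (a x z / (1 / n * p z)) := by
  have hmass : ∑ x ∈ S, ∑ z ∈ S, p z * q x z ≤ 1 :=
    calc ∑ x ∈ S, ∑ z ∈ S, p z * q x z = ∑ z ∈ S, p z * ∑ x ∈ S, q x z := by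
          rw [Finset.sum_comm]; simp only [Finset.mul_sum]
      _ ≤ ∑ z ∈ S, p z := Finset.sum_le_sum fun z hz =>
          mul_le_of_le_one_right ((ha z hz z hz).trans (hap z hz z hz)) (hqcol z hz)
      _ = 1 := hp
  have hterm := fun x hx z hz =>
    mul_log_add_sub_le_mul_log_div (ha x hx z hz) (hap x hx z hz) (hq x hx z hz) hn
  calc ∑ x ∈ S, ∑ z ∈ S, a x z * log (q x z * n)
      ≤ ∑ x ∈ S, ∑ z ∈ S, (a x z * log (q x z * n) + (a x z - p z * q x z)) := by
        simp only [Finset.sum_add_distrib, Finset.sum_sub_distrib, hsum]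
        linarith
    _ ≤ _ := Finset.sum_le_sum fun x hx => Finset.sum_le_sum fun z hz => hterm x hx z hz

end Gibbs

section Fano

variable {ι : Type*} [DecidableEq ι] (S : Finset ι)

lemma sum_ite_eq_add_mul {z : ι} (hz : z ∈ S) (c d : ℝ) :
    ∑ x ∈ S, (if x = z then c else d) = c + ((S.card : ℝ) - 1) * d := by
  rw [← Finset.add_sum_erase S _ hz, if_pos rfl,
    Finset.sum_congr rfl fun x hx => if_neg (Finset.ne_of_mem_erase hx), Finset.sum_const,
    Finset.card_erase_of_mem hz, nsmul_eq_mul, Nat.cast_pred (Finset.card_pos.2 ⟨z, hz⟩)]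

lemma sum_sum_mul_ite (a : ι → ι → ℝ) (c d : ℝ) :
    ∑ x ∈ S, ∑ z ∈ S, a x z * (if x = z then c else d) =
      (∑ x ∈ S, a x x) * c + (∑ x ∈ S, ∑ z ∈ S, a x z - ∑ x ∈ S, a x x) * d := by
  have hrow : ∀ x ∈ S, ∑ z ∈ S, a x z * (if x = z then c else d) =
      a x x * c + (∑ z ∈ S, a x z - a x x) * d := by
    intro x hx
    rw [← Finset.add_sum_erase S _ hx, ← Finset.add_sum_erase S (a x) hx, if_pos rfl,
      Finset.sum_congr rfl fun z hz => by rw [if_neg (Finset.ne_of_mem_erase hz).symm],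
      ← Finset.sum_mul]
    ring
  rw [Finset.sum_congr rfl hrow, Finset.sum_add_distrib, ← Finset.sum_mul, ← Finset.sum_mul,
    Finset.sum_sub_distrib]

-- The right side decreases in `e` as `α < 1 / 2`, and at `e = α` it exceeds the left side by
-- `α (log n - log (n - 1))`.
lemma one_sub_mul_log_sub_binEnt_le {n α e : ℝ} (hn : 2 ≤ n) (hα0 : 0 < α) (hα : α < 1 / 2)
    (he : e ≤ α) :
    (1 - α) * log n - binEnt α ≤ (1 - e) * log ((1 - α) * n) + e * log (α / (n - 1) * n) := by
  rw [log_mul (by linarith) (by linarith), log_mul (div_pos hα0 (by linarith)).ne' (by linarith),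
    log_div hα0.ne' (by linarith), binEnt]
  have hlogn : log (n - 1) ≤ log n := log_le_log (by linarith) (by linarith)
  have hlogn1 : 0 ≤ log (n - 1) := log_nonneg (by linarith)
  have hlogα : log α ≤ log (1 - α) := log_le_log hα0 (by linarith)
  nlinarith [mul_nonneg (sub_nonneg.2 he) (sub_nonneg.2 hlogα),
    mul_nonneg (sub_nonneg.2 he) hlogn1, mul_le_mul_of_nonneg_left hlogn hα0.le]

lemma binEnt_nonneg {p : ℝ} (hp0 : 0 ≤ p) (hp1 : p ≤ 1) : 0 ≤ binEnt p := by
  have h := binEntropy_nonneg hp0 hp1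
  rw [binEntropy, log_inv, log_inv] at h
  rw [binEnt]
  linarith

/-- Fano's inequality for a joint law `a x z` of a uniform source `x` on `S` and a guess `z`,
with guess marginal `p`, in which the guess is correct with probability at least `1 - α`. -/
lemma fano_sum (hS : S.Nonempty) (a : ι → ι → ℝ) (p : ι → ℝ) {α : ℝ} (hα0 : 0 < α) (hα : α < 1 / 2)
    (ha : ∀ x ∈ S, ∀ z ∈ S, 0 ≤ a x z) (hap : ∀ x ∈ S, ∀ z ∈ S, a x z ≤ p z)
    (hrow : ∀ x ∈ S, ∑ z ∈ S, a x z = 1 / S.card) (hp : ∑ z ∈ S, p z = 1)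
    (hdiag : 1 - α ≤ ∑ x ∈ S, a x x) :
    (1 - α) * log S.card - binEnt α ≤
      ∑ x ∈ S, ∑ z ∈ S, a x z * log (a x z / (1 / S.card * p z)) := by
  set n : ℝ := (S.card : ℝ) with hn_def
  have hsum : ∑ x ∈ S, ∑ z ∈ S, a x z = 1 := by
    rw [Finset.sum_congr rfl hrow, Finset.sum_const, nsmul_eq_mul, ← hn_def,
      mul_one_div_cancel (by rw [hn_def]; exact_mod_cast hS.card_pos.ne')]
  by_cases hcard : S.card = 1
  · have hn1 : n = 1 := by simp [hn_def, hcard]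
    calc (1 - α) * log n - binEnt α ≤ 0 := by
          rw [hn1, log_one]; linarith [binEnt_nonneg hα0.le (by linarith)]
      _ = ∑ x ∈ S, ∑ z ∈ S, a x z * log (1 * n) := by simp [hn1]
      _ ≤ _ := sum_sum_mul_log_le S a (fun _ _ => 1) p (by linarith) ha hap
          (fun _ _ _ _ => one_pos) (fun z _ => by simp [hcard]) hsum hp
  · have hn2 : 2 ≤ n := by
      rw [hn_def]; exact_mod_cast (by have := hS.card_pos; omega : 2 ≤ S.card)
    set q : ι → ι → ℝ := fun x z => if x = z then 1 - α else α / (n - 1)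
    have hq : ∀ x ∈ S, ∀ z ∈ S, 0 < q x z := fun x _ z _ => by
      dsimp only [q]; split_ifs
      · linarith
      · exact div_pos hα0 (by linarith)
    have hqcol : ∀ z ∈ S, ∑ x ∈ S, q x z ≤ 1 := fun z hz => by
      rw [sum_ite_eq_add_mul S hz, mul_div_cancel₀ _ (by linarith : n - 1 ≠ 0)]
      linarith
    have hlogq : ∀ x z, a x z * log (q x z * n) =
        a x z * (if x = z then log ((1 - α) * n) else log (α / (n - 1) * n)) := fun x z => by
      dsimp only [q]; split_ifs <;> rfl
    calc (1 - α) * log n - binEnt α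
        ≤ (∑ x ∈ S, a x x) * log ((1 - α) * n) +
            (1 - ∑ x ∈ S, a x x) * log (α / (n - 1) * n) := by
          simpa using one_sub_mul_log_sub_binEnt_le (e := 1 - ∑ x ∈ S, a x x)
            (by linarith) hα0 hα (by linarith)
      _ = ∑ x ∈ S, ∑ z ∈ S, a x z * log (q x z * n) := by
          simp only [hlogq, sum_sum_mul_ite, hsum]
      _ ≤ _ := sum_sum_mul_log_le S a q p (by linarith) ha hap hq hqcol hsum hp

end Fano

section Partition

variable {Ω α ι : Type*} [MeasurableSpace Ω] [MeasurableSpace α]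

lemma sum_measureReal_inter_preimage (μ : Measure Ω) [IsFiniteMeasure μ] {Y : Ω → α}
    (hY : Measurable Y) (s : Finset ι) (C : ι → Set α) (hm : ∀ i ∈ s, MeasurableSet (C i))
    (hd : (s : Set ι).PairwiseDisjoint C) (hcover : ⋃ i ∈ s, C i = univ) {E : Set Ω}
    (hE : MeasurableSet E) : ∑ i ∈ s, μ.real (E ∩ Y ⁻¹' C i) = μ.real E := by
  rw [← measureReal_biUnion_finset
    (fun i hi j hj hij => ((hd hi hj hij).preimage Y).mono inter_subset_right inter_subset_right)
    (fun i hi => hE.inter (hY (hm i hi))),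
    ← inter_iUnion₂, ← preimage_iUnion₂, hcover, preimage_univ, inter_univ]

lemma IsFinPartition.sum_measureReal_inter_preimage {Qq : Finset (Set α)}
    (hQq : IsFinPartition Qq) (μ : Measure Ω) [IsFiniteMeasure μ] {Y : Ω → α}
    (hY : Measurable Y) {E : Set Ω} (hE : MeasurableSet E) :
    ∑ B ∈ Qq, μ.real (E ∩ Y ⁻¹' B) = μ.real E :=
  _root_.sum_measureReal_inter_preimage μ hY Qq id hQq.1 hQq.2.1 hQq.2.2 hE

lemma isFinPartition_image [DecidableEq (Set α)] (s : Finset ι) (C : ι → Set α)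
    (hm : ∀ i ∈ s, MeasurableSet (C i)) (hd : (s : Set ι).PairwiseDisjoint C)
    (hcover : ⋃ i ∈ s, C i = univ) : IsFinPartition (s.image C) := by
  refine ⟨?_, ?_, ?_⟩
  · simpa using hm
  · simp only [Finset.mem_image]
    rintro _ ⟨i, hi, rfl⟩ _ ⟨j, hj, rfl⟩ hij
    exact hd hi hj fun h => hij (h ▸ rfl)
  · simpa using hcover

lemma exists_partition_superset (s : Finset ι) (hs : s.Nonempty) (B : ι → Set α)
    (hm : ∀ i ∈ s, MeasurableSet (B i)) (hd : (s : Set ι).PairwiseDisjoint B) :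
    ∃ C : ι → Set α, (∀ i ∈ s, MeasurableSet (C i)) ∧ (s : Set ι).PairwiseDisjoint C ∧
      ⋃ i ∈ s, C i = univ ∧ ∀ i ∈ s, B i ⊆ C i := by
  classical
  obtain ⟨i₀, hi₀⟩ := hs
  set R := (⋃ i ∈ s, B i)ᶜ
  refine ⟨fun i => if i = i₀ then B i ∪ R else B i, fun i hi => ?_, fun i hi j hj hij => ?_,
    ?_, fun i _ => ?_⟩
  · have hR : MeasurableSet R := (Finset.measurableSet_biUnion s hm).compl
    dsimp only
    split_ifs
    exacts [(hm i hi).union hR, hm i hi]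
  · have hBR : ∀ k ∈ s, Disjoint (B k) R := fun k hk =>
      disjoint_compl_right.mono_left (subset_biUnion_of_mem (u := B) hk)
    dsimp only [Function.onFun]
    split_ifs with h₁ h₂ h₂
    · exact absurd (h₁.trans h₂.symm) hij
    · exact disjoint_union_left.2 ⟨hd hi hj hij, (hBR j hj).symm⟩
    · exact disjoint_union_right.2 ⟨hd hi hj hij, hBR i hi⟩
    · exact hd hi hj hij
  · refine eq_univ_of_forall fun y => ?_
    by_cases hy : y ∈ ⋃ i ∈ s, B i
    · obtain ⟨i, hi, hyi⟩ := mem_iUnion₂.1 hy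
      refine mem_iUnion₂.2 ⟨i, hi, ?_⟩
      dsimp only
      split_ifs
      exacts [Or.inl hyi, hyi]
    · exact mem_iUnion₂.2 ⟨i₀, hi₀, by simp only [if_pos]; exact Or.inr hy⟩
  · dsimp only
    split_ifs
    exacts [subset_union_left, subset_rfl]

end Partition

section MutualInfo

variable {Ω 𝒳 𝒴 : Type*} [MeasurableSpace Ω] (P : Measure Ω) (X : Ω → 𝒳) (Y : Ω → 𝒴)

lemma miSum_image {ι κ : Type*} [DecidableEq (Set 𝒳)] [DecidableEq (Set 𝒴)] (s : Finset ι)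
    (t : Finset κ) (f : ι → Set 𝒳) (g : κ → Set 𝒴) (hf : InjOn f s) (hg : InjOn g t) :
    miSum P X Y (s.image f) (t.image g) = ∑ i ∈ s, ∑ j ∈ t,
      P.real (X ⁻¹' f i ∩ Y ⁻¹' g j) *
        log (P.real (X ⁻¹' f i ∩ Y ⁻¹' g j) / (P.real (X ⁻¹' f i) * P.real (Y ⁻¹' g j))) := by
  rw [miSum, Finset.sum_image hf]
  exact Finset.sum_congr rfl fun i _ => Finset.sum_image hg

lemma mul_log_div_mul_le_mul_log {j a b n : ℝ} (hj : 0 ≤ j) (hja : j ≤ a) (hjb : j ≤ b)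
    (hn : 0 < n) (ha : 0 < a → 1 / n ≤ a) : j * log (j / (a * b)) ≤ j * log n := by
  rcases hj.eq_or_lt with rfl | hj
  · simp
  have ha0 := hj.trans_le hja
  have hb0 := hj.trans_le hjb
  refine mul_le_mul_of_nonneg_left (log_le_log (by positivity) ?_) hj.le
  calc j / (a * b) ≤ 1 / a := by
        rw [div_le_div_iff₀ (by positivity) ha0]; nlinarith
    _ ≤ n := by rw [one_div_le ha0 hn]; exact ha ha0

lemma miSum_le_log [MeasurableSpace 𝒳] [MeasurableSpace 𝒴] [IsProbabilityMeasure P]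
    (hX : Measurable X) (hY : Measurable Y) {n : ℝ} (hn : 0 < n) {Pp : Finset (Set 𝒳)}
    {Qq : Finset (Set 𝒴)} (hPp : IsFinPartition Pp) (hQq : IsFinPartition Qq)
    (hmass : ∀ A, 0 < P.real (X ⁻¹' A) → 1 / n ≤ P.real (X ⁻¹' A)) :
    miSum P X Y Pp Qq ≤ log n := by
  have hjoint : ∑ A ∈ Pp, ∑ B ∈ Qq, P.real (X ⁻¹' A ∩ Y ⁻¹' B) = 1 := by
    rw [Finset.sum_congr rfl fun A hA =>
      hQq.sum_measureReal_inter_preimage P hY (hX (hPp.1 A hA))]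
    simpa using hPp.sum_measureReal_inter_preimage P hX MeasurableSet.univ
  calc miSum P X Y Pp Qq ≤ ∑ A ∈ Pp, ∑ B ∈ Qq, P.real (X ⁻¹' A ∩ Y ⁻¹' B) * log n :=
        Finset.sum_le_sum fun A _ => Finset.sum_le_sum fun B _ =>
          mul_log_div_mul_le_mul_log measureReal_nonneg (measureReal_mono inter_subset_left)
            (measureReal_mono inter_subset_right) hn (hmass A)
    _ = log n := by simp only [← Finset.sum_mul, hjoint, one_mul]

lemma miSum_le_mutualInfo [MeasurableSpace 𝒳] [MeasurableSpace 𝒴] {M : ℝ}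
    (hM : ∀ Pp Qq, IsFinPartition Pp → IsFinPartition Qq → miSum P X Y Pp Qq ≤ M)
    {Pp : Finset (Set 𝒳)} {Qq : Finset (Set 𝒴)} (hPp : IsFinPartition Pp)
    (hQq : IsFinPartition Qq) : miSum P X Y Pp Qq ≤ mutualInfo P X Y :=
  le_ciSup (f := fun pq : {pq : Finset (Set 𝒳) × Finset (Set 𝒴) //
      IsFinPartition pq.1 ∧ IsFinPartition pq.2} => miSum P X Y pq.1.1 pq.1.2)
    ⟨M, by rintro _ ⟨pq, rfl⟩; exact hM _ _ pq.2.1 pq.2.2⟩ ⟨(Pp, Qq), hPp, hQq⟩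

end MutualInfo

section Decoding

variable {Ω 𝒳 : Type*} [MeasurableSpace Ω] (P : Measure Ω)

lemma integrable_dist_of_compactSpace [PseudoMetricSpace 𝒳] [CompactSpace 𝒳]
    [MeasurableSpace 𝒳] [OpensMeasurableSpace 𝒳] [IsFiniteMeasure P] {X Y : Ω → 𝒳}
    (hX : Measurable X) (hY : Measurable Y) : Integrable (fun ω => dist (X ω) (Y ω)) P :=
  Integrable.of_bound (hX.dist hY).aestronglyMeasurable (Metric.diam (univ : Set 𝒳))
    (ae_of_all _ fun _ => by
      rw [norm_of_nonneg dist_nonneg]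
      exact Metric.dist_le_diam_of_mem isCompact_univ.isBounded (mem_univ _) (mem_univ _))

lemma one_sub_integral_div_le_measureReal_lt [IsProbabilityMeasure P] {f : Ω → ℝ}
    (hf0 : ∀ ω, 0 ≤ f ω) (hf : Integrable f P) {r : ℝ} (hr : 0 < r) :
    1 - (∫ ω, f ω ∂P) / r ≤ P.real {ω | f ω < r} := by
  have hmarkov := mul_meas_ge_le_integral_of_nonneg (ae_of_all _ hf0) hf r
  have hunion : {ω | f ω < r} ∪ {ω | r ≤ f ω} = univ :=
    eq_univ_of_forall fun ω => (lt_or_ge (f ω) r).imp id id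
  have hcover := measureReal_union_le (μ := P) {ω | f ω < r} {ω | r ≤ f ω}
  rw [hunion, probReal_univ] at hcover
  have : P.real {ω | r ≤ f ω} ≤ (∫ ω, f ω ∂P) / r := by rw [le_div_iff₀ hr]; linarith
  linarith

lemma measureReal_dist_lt_le_sum [PseudoMetricSpace 𝒳] [MeasurableSpace 𝒳] [IsFiniteMeasure P]
    {X Y : Ω → 𝒳} (hX : Measurable X) (hY : Measurable Y) {S : Finset 𝒳} (hXS : ∀ ω, X ω ∈ S)
    {C : 𝒳 → Set 𝒳} (hCm : ∀ x ∈ S, MeasurableSet (C x)) (hCd : (S : Set 𝒳).PairwiseDisjoint C)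
    {r : ℝ} (hball : ∀ x ∈ S, Metric.ball x r ⊆ C x) :
    P.real {ω | dist (X ω) (Y ω) < r} ≤ ∑ x ∈ S, P.real (X ⁻¹' C x ∩ Y ⁻¹' C x) := by
  rw [← measureReal_biUnion_finset
    (fun x hx y hy hxy => ((hCd hx hy hxy).preimage X).mono inter_subset_left inter_subset_left)
    (fun x hx => (hX (hCm x hx)).inter (hY (hCm x hx)))]
  refine measureReal_mono (fun ω hω => mem_iUnion₂.2 ⟨X ω, hXS ω, ?_, ?_⟩) (measure_ne_top P _)
  · exact hball _ (hXS ω) (Metric.mem_ball_self (dist_nonneg.trans_lt hω))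
  · exact hball _ (hXS ω) (by rw [Metric.mem_ball, dist_comm]; exact hω)

lemma one_div_card_le_measureReal_preimage [IsFiniteMeasure P] {X : Ω → 𝒳} {S : Finset 𝒳}
    (hXS : ∀ ω, X ω ∈ S) (hunif : ∀ x ∈ S, P.real {ω | X ω = x} = 1 / S.card) {A : Set 𝒳}
    (hA : 0 < P.real (X ⁻¹' A)) : 1 / S.card ≤ P.real (X ⁻¹' A) := by
  obtain ⟨ω, hω⟩ := nonempty_of_measure_ne_zero (μ := P) (s := X ⁻¹' A) fun h => by
    simp [Measure.real, h] at hA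
  rw [← hunif (X ω) (hXS ω)]
  exact measureReal_mono fun ω' (h : X ω' = X ω) => show X ω' ∈ A from h ▸ hω

end Decoding

/-- If `S` is a `2Dε`-separated set in a compact metric space, `X` is uniformly
distributed over `S` and `E(d(X,Y)) < ε`, then
`I(X;Y) ≥ (1 - 1/D) log |S| - H(1/D)`. -/
theorem mutualInfo_ge_of_separated {Ω 𝒳 : Type*} [MeasurableSpace Ω]
    [MetricSpace 𝒳] [CompactSpace 𝒳] [MeasurableSpace 𝒳] [BorelSpace 𝒳]
    (P : Measure Ω) [IsProbabilityMeasure P] (ε D : ℝ) (hε : 0 < ε) (hD : 2 < D)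
    (S : Finset 𝒳) (hS : S.Nonempty)
    (hsep : ∀ x ∈ S, ∀ y ∈ S, x ≠ y → 2 * D * ε ≤ dist x y)
    (X Y : Ω → 𝒳) (hX : Measurable X) (hY : Measurable Y)
    (hXS : ∀ ω, X ω ∈ S)
    (hunif : ∀ x ∈ S, (P {ω | X ω = x}).toReal = 1 / S.card)
    (hdist : ∫ ω, dist (X ω) (Y ω) ∂P < ε) :
    (1 - 1 / D) * Real.log S.card - binEnt (1 / D) ≤ mutualInfo P X Y := by
  classical
  have hr : 0 < D * ε := by positivity
  -- decode `Y` to the point of `S` whose cell it lies in; cells contain the `Dε`-balls around `S`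
  obtain ⟨C, hCm, hCd, hCcover, hball⟩ := exists_partition_superset S hS (Metric.ball · (D * ε))
    (fun _ _ => measurableSet_ball)
    (fun x hx y hy hxy => Metric.ball_disjoint_ball (by linarith [hsep x hx y hy hxy]))
  have hmem : ∀ x ∈ S, x ∈ C x := fun x hx => hball x hx (Metric.mem_ball_self hr)
  have hmarg : ∀ x ∈ S, P.real (X ⁻¹' C x) = 1 / S.card := fun x hx => by
    rw [← hunif x hx]
    congr 1
    ext ω
    exact ⟨fun h => hCd.elim_set (hXS ω) hx _ (hmem _ (hXS ω)) h, fun h => h ▸ hmem x hx⟩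
  have hdiag : 1 - 1 / D ≤ ∑ x ∈ S, P.real (X ⁻¹' C x ∩ Y ⁻¹' C x) :=
    calc 1 - 1 / D ≤ 1 - (∫ ω, dist (X ω) (Y ω) ∂P) / (D * ε) := by
          rw [sub_le_sub_iff_left, div_le_div_iff₀ hr (by linarith)]; nlinarith
      _ ≤ P.real {ω | dist (X ω) (Y ω) < D * ε} := one_sub_integral_div_le_measureReal_lt P
          (fun _ => dist_nonneg) (integrable_dist_of_compactSpace P hX hY) hr
      _ ≤ _ := measureReal_dist_lt_le_sum P hX hY hXS hCm hCd hball
  have hinj : InjOn C S := fun x hx y hy hxy => hCd.elim_set hx hy x (hmem x hx) (hxy ▸ hmem x hx)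
  have hpart := isFinPartition_image S C hCm hCd hCcover
  calc (1 - 1 / D) * log S.card - binEnt (1 / D)
      ≤ ∑ x ∈ S, ∑ z ∈ S, P.real (X ⁻¹' C x ∩ Y ⁻¹' C z) *
          log (P.real (X ⁻¹' C x ∩ Y ⁻¹' C z) / (1 / S.card * P.real (Y ⁻¹' C z))) :=
        fano_sum S hS _ _ (by positivity) (by rw [div_lt_div_iff₀] <;> linarith)
          (fun _ _ _ _ => measureReal_nonneg) (fun _ _ _ _ => measureReal_mono inter_subset_right)
          (fun x hx => by rw [sum_measureReal_inter_preimage P hY S C hCm hCd hCcover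
            (hX (hCm x hx)), hmarg x hx])
          (by simpa using sum_measureReal_inter_preimage P hY S C hCm hCd hCcover .univ) hdiag
    _ = miSum P X Y (S.image C) (S.image C) := by
        rw [miSum_image P X Y S S C C hinj hinj]
        exact Finset.sum_congr rfl fun x hx => by rw [hmarg x hx]
    _ ≤ mutualInfo P X Y := miSum_le_mutualInfo P X Y (fun _ _ hPp hQq =>
        miSum_le_log P X Y hX hY (by exact_mod_cast hS.card_pos) hPp hQq
          fun _ => one_div_card_le_measureReal_preimage P hXS hunif) hpart hpart
end

section
/- Let (𝒳,d) be a compact metric space, F a finite set, ε > 0 and L ≥ 1. Let M = #(𝒳,d,ε) and N = #(𝒳, d̄_F, ε), where d̄_F is the averaged metric on 𝒳 induced by a family of isometries indexed by F (d̄_F(x,y) = (1/|F|)Σ_{g∈F} d(gx,gy) for a group action). Then #(𝒳, d_F, 2Lε) ≤ 2^{|F|} · M^{|F|/L} · N, where d_F(x,y) = max_{g∈F} d(gx,gy). -/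
/-!
Fix a minimal `d̄_F`-cover `𝒱` and a base point `p_W` in each `W ∈ 𝒱`. For `y ∈ W` the average
of `d(g p_W, g y)` over `g ∈ F` is `< ε`, so by Markov's inequality at most `K = ⌊|F|/L⌋`
elements `g ∈ F` have `d(g p_W, g y) ≥ Lε`. Recording this exceptional set `B` together with,
for each `g ∈ B`, a member of a minimal `ε`-cover of `(𝒳, d)` containing `g y`, splits `W` into
at most `2^{|F|} M^K` open pieces. On a piece every `g ∈ F` moves points less than `2Lε` apart:
for `g ∈ B` because of the chosen member, for `g ∉ B` by the triangle inequality through `g p_W`.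
-/

open MeasureTheory Filter

/-- The minimal cardinality `#(𝒳,ρ,ε)` of an open cover of `𝒳` all of whose members
have `ρ`-diameter `< ε`. -/
noncomputable def covNum (𝒳 : Type*) [TopologicalSpace 𝒳] (ρ : 𝒳 → 𝒳 → ℝ) (ε : ℝ) : ℕ :=
  sInf {n : ℕ | ∃ U : Finset (Set 𝒳), U.card = n ∧ (∀ V ∈ U, IsOpen V) ∧
    (⋃ V ∈ U, V) = Set.univ ∧ ∀ V ∈ U, ∀ x ∈ V, ∀ y ∈ V, ρ x y < ε}

/-- The max (sup) metric `d_F(x,y) = max_{g∈F} d(gx,gy)`. -/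
noncomputable def dMax {G 𝒳 : Type*} [SMul G 𝒳] [MetricSpace 𝒳] (F : Finset G)
    (x y : 𝒳) : ℝ :=
  ⨆ g ∈ F, dist (g • x) (g • y)

/-- The averaged metric `d̄_F(x,y) = (1/|F|) ∑_{g∈F} d(gx,gy)`. -/
noncomputable def dBar {G 𝒳 : Type*} [SMul G 𝒳] [MetricSpace 𝒳] (F : Finset G)
    (x y : 𝒳) : ℝ :=
  ((F.card : ℝ))⁻¹ * ∑ g ∈ F, dist (g • x) (g • y)

/-- `F` is a (left) Følner sequence of nonempty finite subsets of `G`. -/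
def IsFolner {G : Type*} [Group G] [DecidableEq G] (F : ℕ → Finset G) : Prop :=
  (∀ n, (F n).Nonempty) ∧
  ∀ g : G, Filter.Tendsto
    (fun n => ((symmDiff ((F n).image (fun h => g * h)) (F n)).card : ℝ) / ((F n).card : ℝ))
    Filter.atTop (nhds 0)

section Cover

variable {𝒳 : Type*} [TopologicalSpace 𝒳]

def IsSmallCoverOf (ρ : 𝒳 → 𝒳 → ℝ) (ε : ℝ) (s : Set 𝒳) (U : Finset (Set 𝒳)) : Prop :=
  (∀ V ∈ U, IsOpen V) ∧ s ⊆ (⋃ V ∈ U, V) ∧ ∀ V ∈ U, ∀ x ∈ V, ∀ y ∈ V, ρ x y < ε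

variable {ρ : 𝒳 → 𝒳 → ℝ} {ε : ℝ}

lemma covNum_le_card {U : Finset (Set 𝒳)} (hU : IsSmallCoverOf ρ ε Set.univ U) :
    covNum 𝒳 ρ ε ≤ U.card :=
  Nat.sInf_le ⟨U, rfl, hU.1, Set.univ_subset_iff.mp hU.2.1, hU.2.2⟩

lemma covNum_of_isEmpty [IsEmpty 𝒳] : covNum 𝒳 ρ ε = 0 :=
  Nat.eq_zero_of_le_zero <| covNum_le_card (U := ∅) ⟨by simp, fun x _ => isEmptyElim x, by simp⟩

lemma IsSmallCoverOf.nonempty {s : Set 𝒳} {U : Finset (Set 𝒳)} (hU : IsSmallCoverOf ρ ε s U)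
    (hs : s.Nonempty) : U.Nonempty := by
  obtain ⟨x, hx⟩ := hs
  obtain ⟨V, hV, -⟩ := Set.mem_iUnion₂.mp (hU.2.1 hx)
  exact ⟨V, hV⟩

lemma IsSmallCoverOf.biUnion [DecidableEq (Set 𝒳)] {ρ' : 𝒳 → 𝒳 → ℝ} {ε' : ℝ} {s : Set 𝒳}
    {V : Finset (Set 𝒳)} (hV : IsSmallCoverOf ρ' ε' s V) {C : Set 𝒳 → Finset (Set 𝒳)}
    (hC : ∀ W ∈ V, IsSmallCoverOf ρ ε W (C W)) : IsSmallCoverOf ρ ε s (V.biUnion C) := by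
  refine ⟨fun U hU => ?_, fun x hx => ?_, fun U hU => ?_⟩
  · obtain ⟨W, hW, hU⟩ := Finset.mem_biUnion.mp hU
    exact (hC W hW).1 U hU
  · obtain ⟨W, hW, hxW⟩ := Set.mem_iUnion₂.mp (hV.2.1 hx)
    obtain ⟨U, hU, hxU⟩ := Set.mem_iUnion₂.mp ((hC W hW).2.1 hxW)
    exact Set.mem_biUnion (Finset.mem_biUnion.mpr ⟨W, hW, hU⟩) hxU
  · obtain ⟨W, hW, hU⟩ := Finset.mem_biUnion.mp hU
    exact (hC W hW).2.2 U hU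

lemma exists_isSmallCoverOf_card_eq_covNum [CompactSpace 𝒳] (hε : 0 < ε)
    (hρ : ∀ x, Continuous (ρ x)) (hρ_self : ∀ x, ρ x x = 0)
    (hρ_tri : ∀ x y z, ρ y z ≤ ρ x y + ρ x z) :
    ∃ U : Finset (Set 𝒳), IsSmallCoverOf ρ ε Set.univ U ∧ U.card = covNum 𝒳 ρ ε := by
  classical
  let ball : 𝒳 → Set 𝒳 := fun x => {y | ρ x y < ε / 2}
  have hball : ∀ x, IsOpen (ball x) := fun x => isOpen_lt (hρ x) continuous_const
  obtain ⟨t, ht⟩ := isCompact_univ.elim_finite_subcover ball hball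
    fun x _ => Set.mem_iUnion.mpr ⟨x, by simp [ball, hρ_self, hε]⟩
  have hballs : IsSmallCoverOf ρ ε Set.univ (t.image ball) := by
    refine ⟨?_, fun x hx => ?_, ?_⟩
    · simpa using fun x _ => hball x
    · obtain ⟨c, hc, hxc⟩ := Set.mem_iUnion₂.mp (ht hx)
      exact Set.mem_biUnion (Finset.mem_image_of_mem ball hc) hxc
    · simp only [Finset.mem_image, forall_exists_index, and_imp, forall_apply_eq_imp_iff₂]
      intro c _ x hx y hy
      linarith [hρ_tri c x y, show ρ c x < ε / 2 from hx, show ρ c y < ε / 2 from hy]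
  obtain ⟨U, hU, hUcard⟩ := Nat.sInf_mem (s := {n : ℕ | ∃ U : Finset (Set 𝒳), U.card = n ∧
    (∀ V ∈ U, IsOpen V) ∧ (⋃ V ∈ U, V) = Set.univ ∧ ∀ V ∈ U, ∀ x ∈ V, ∀ y ∈ V, ρ x y < ε})
    ⟨_, _, rfl, hballs.1, Set.univ_subset_iff.mp hballs.2.1, hballs.2.2⟩
  exact ⟨U, ⟨hUcard.1, hUcard.2.1.symm.subset, hUcard.2.2⟩, hU⟩

end Cover

section Action

variable {G 𝒳 : Type*} [SMul G 𝒳] [MetricSpace 𝒳] {F : Finset G}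

lemma dMax_lt {x y : 𝒳} {c : ℝ} (hc : 0 < c) (h : ∀ g ∈ F, dist (g • x) (g • y) < c) :
    dMax F x y < c := by
  rcases F.eq_empty_or_nonempty with rfl | hF
  · simpa [dMax] using hc
  obtain ⟨g₀, hg₀, hmax⟩ := F.exists_max_image (fun g => dist (g • x) (g • y)) hF
  exact (Real.iSup_le (fun g => Real.iSup_le (hmax g) dist_nonneg) dist_nonneg).trans_lt
    (h g₀ hg₀)

lemma card_mul_dBar (F : Finset G) (x y : 𝒳) :
    (F.card : ℝ) * dBar F x y = ∑ g ∈ F, dist (g • x) (g • y) := by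
  rcases F.eq_empty_or_nonempty with rfl | hF
  · simp
  rw [dBar, ← mul_assoc, mul_inv_cancel₀ (by exact_mod_cast hF.card_ne_zero), one_mul]

lemma dBar_self (F : Finset G) (x : 𝒳) : dBar F x x = 0 := by
  simp [dBar]

lemma dBar_le_add (F : Finset G) (x y z : 𝒳) : dBar F y z ≤ dBar F x y + dBar F x z := by
  rw [dBar, dBar, dBar, ← mul_add, ← Finset.sum_add_distrib]
  gcongr with g
  exact dist_triangle_left _ _ _

lemma continuous_dBar (hcont : ∀ g : G, Continuous fun x : 𝒳 => g • x) (x : 𝒳) :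
    Continuous (dBar F x) :=
  continuous_const.mul <| continuous_finsetSum _ fun g _ => continuous_const.dist (hcont g)

-- Markov's inequality for the average `dBar`.
lemma card_filter_le_dist_mul_le (F : Finset G) (x y : 𝒳) (r : ℝ) :
    ((F.filter fun g => r ≤ dist (g • x) (g • y)).card : ℝ) * r ≤ F.card * dBar F x y := by
  rw [card_mul_dBar, ← nsmul_eq_mul]
  calc _ ≤ ∑ g ∈ F.filter fun g => r ≤ dist (g • x) (g • y), dist (g • x) (g • y) :=
        Finset.card_nsmul_le_sum _ _ _ fun g hg => (Finset.mem_filter.mp hg).2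
    _ ≤ ∑ g ∈ F, dist (g • x) (g • y) :=
        Finset.sum_le_sum_of_subset_of_nonneg (Finset.filter_subset _ _) fun _ _ _ => dist_nonneg

lemma card_filter_le_floor {x y : 𝒳} {ε L : ℝ} (hε : 0 < ε) (hL : 0 < L)
    (h : dBar F x y ≤ ε) :
    (F.filter fun g => L * ε ≤ dist (g • x) (g • y)).card ≤ ⌊(F.card : ℝ) / L⌋₊ := by
  apply Nat.le_floor
  rw [le_div_iff₀ hL, ← mul_le_mul_iff_left₀ hε, mul_assoc]
  exact (card_filter_le_dist_mul_le F x y _).trans (by gcongr)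

variable [DecidableEq G]

def refinePiece (F : Finset G) (r : ℝ) (p : 𝒳) (V : Set 𝒳) (B : Finset G)
    (f : ∀ g ∈ B, Set 𝒳) : Set 𝒳 :=
  V ∩ ⋂ g ∈ F, if h : g ∈ B then (g • ·) ⁻¹' f g h else {y | dist (g • p) (g • y) < r}

noncomputable def refineCover (F : Finset G) (r : ℝ) (K : ℕ) (U : Finset (Set 𝒳)) (p : 𝒳)
    (V : Set 𝒳) : Finset (Set 𝒳) :=
  ((F.powerset.filter fun B => B.card ≤ K).sigma fun B => B.pi fun _ => U).image
    fun q => refinePiece F r p V q.1 q.2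

lemma card_refineCover_le (r : ℝ) {K : ℕ} {U : Finset (Set 𝒳)} (hU : U.Nonempty) (p : 𝒳)
    (V : Set 𝒳) : (refineCover F r K U p V).card ≤ 2 ^ F.card * U.card ^ K := by
  classical
  calc (refineCover F r K U p V).card
      ≤ ∑ B ∈ F.powerset.filter fun B => B.card ≤ K, U.card ^ B.card := by
        refine Finset.card_image_le.trans_eq ?_
        simp [Finset.card_sigma, Finset.card_pi]
    _ ≤ (F.powerset.filter fun B => B.card ≤ K).card * U.card ^ K :=
        Finset.sum_le_card_nsmul _ _ _ fun B hB =>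
          Nat.pow_le_pow_right hU.card_pos (Finset.mem_filter.mp hB).2
    _ ≤ 2 ^ F.card * U.card ^ K := by
        gcongr
        exact (Finset.card_filter_le _ _).trans (Finset.card_powerset F).le

lemma isOpen_refinePiece (hcont : ∀ g : G, Continuous fun x : 𝒳 => g • x) (r : ℝ) (p : 𝒳)
    {V : Set 𝒳} (hV : IsOpen V) {B : Finset G} {f : ∀ g ∈ B, Set 𝒳}
    (hf : ∀ g (hg : g ∈ B), IsOpen (f g hg)) : IsOpen (refinePiece F r p V B f) := by
  refine hV.inter <| isOpen_biInter_finset fun g _ => ?_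
  split_ifs with hg
  · exact (hf g hg).preimage (hcont g)
  · exact isOpen_lt (continuous_const.dist (hcont g)) continuous_const

lemma mem_refinePiece_filter {r : ℝ} {p y : 𝒳} {V : Set 𝒳} (hy : y ∈ V)
    {f : ∀ g ∈ F.filter (fun g => r ≤ dist (g • p) (g • y)), Set 𝒳}
    (hf : ∀ g hg, g • y ∈ f g hg) :
    y ∈ refinePiece F r p V (F.filter fun g => r ≤ dist (g • p) (g • y)) f := by
  refine ⟨hy, Set.mem_iInter₂.mpr fun g hgF => ?_⟩
  split_ifs with hg
  · exact hf g hg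
  · simpa [hgF] using hg

lemma dMax_lt_of_mem_refinePiece {r c : ℝ} (hr : 0 < r) (hcr : c ≤ 2 * r) {p : 𝒳} {V : Set 𝒳}
    {B : Finset G} {f : ∀ g ∈ B, Set 𝒳}
    (hf : ∀ g (hg : g ∈ B), ∀ x ∈ f g hg, ∀ y ∈ f g hg, dist x y < c) {x y : 𝒳}
    (hx : x ∈ refinePiece F r p V B f) (hy : y ∈ refinePiece F r p V B f) :
    dMax F x y < 2 * r := by
  refine dMax_lt (by positivity) fun g hgF => ?_
  have hxg := Set.mem_iInter₂.mp hx.2 g hgF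
  have hyg := Set.mem_iInter₂.mp hy.2 g hgF
  split_ifs at hxg hyg with hg
  · exact (hf g hg _ hxg _ hyg).trans_le hcr
  · calc dist (g • x) (g • y) ≤ dist (g • p) (g • x) + dist (g • p) (g • y) :=
          dist_triangle_left _ _ _
      _ < r + r := add_lt_add hxg hyg
      _ = 2 * r := (two_mul r).symm

lemma isSmallCoverOf_refineCover (hcont : ∀ g : G, Continuous fun x : 𝒳 => g • x)
    {r c : ℝ} (hr : 0 < r) (hcr : c ≤ 2 * r) {K : ℕ} {U : Finset (Set 𝒳)}
    (hU : IsSmallCoverOf dist c Set.univ U) {p : 𝒳} {V : Set 𝒳} (hV : IsOpen V)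
    (hK : ∀ y ∈ V, (F.filter fun g => r ≤ dist (g • p) (g • y)).card ≤ K) :
    IsSmallCoverOf (dMax F) (2 * r) V (refineCover F r K U p V) := by
  classical
  simp only [IsSmallCoverOf, refineCover, Finset.mem_image, Finset.mem_sigma, Finset.mem_filter,
    Finset.mem_powerset, Finset.mem_pi, Sigma.exists, forall_exists_index, and_imp]
  refine ⟨?_, fun y hy => ?_, ?_⟩
  · rintro _ B f - - hf rfl
    exact isOpen_refinePiece hcont r p hV fun g hg => hU.1 _ (hf g hg)
  · choose u hu hyu using fun z => Set.mem_iUnion₂.mp (hU.2.1 (Set.mem_univ z))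
    refine Set.mem_biUnion ⟨_, fun g _ => u (g • y), ⟨⟨Finset.filter_subset _ _, hK y hy⟩,
      fun g _ => hu _⟩, rfl⟩ (mem_refinePiece_filter hy fun g _ => hyu _)
  · rintro _ B f - - hf rfl x hx y hy
    exact dMax_lt_of_mem_refinePiece hr hcr (fun g hg => hU.2.2 _ (hf g hg)) hx hy

end Action

theorem covNum_dMax_le_general {G 𝒳 : Type*} [Group G] [MulAction G 𝒳]
    [MetricSpace 𝒳] [CompactSpace 𝒳]
    (hcont : ∀ g : G, Continuous fun x : 𝒳 => g • x)
    (F : Finset G) (ε L : ℝ) (hε : 0 < ε) (hL : 1 ≤ L) :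
    (covNum 𝒳 (dMax F) (2 * L * ε) : ℝ) ≤
      2 ^ F.card * (covNum 𝒳 dist ε : ℝ) ^ ((F.card : ℝ) / L) *
        (covNum 𝒳 (dBar F) ε : ℝ) := by
  classical
  rcases isEmpty_or_nonempty 𝒳 with h𝒳 | h𝒳
  · rw [covNum_of_isEmpty, Nat.cast_zero]
    positivity
  have hL₀ : 0 < L := one_pos.trans_le hL
  obtain ⟨U, hU, hUcard⟩ := exists_isSmallCoverOf_card_eq_covNum hε
    (ρ := (dist : 𝒳 → 𝒳 → ℝ)) (fun x => continuous_const.dist continuous_id) dist_self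
    fun x y z => dist_triangle_left y z x
  obtain ⟨V, hV, hVcard⟩ := exists_isSmallCoverOf_card_eq_covNum hε (continuous_dBar hcont)
    (dBar_self F) (dBar_le_add F)
  set K := ⌊(F.card : ℝ) / L⌋₊
  -- `Classical.epsilon (· ∈ W)` is a point of `W` whenever `W` is nonempty
  let C := V.biUnion fun W => refineCover F (L * ε) K U (Classical.epsilon (· ∈ W)) W
  have hC : IsSmallCoverOf (dMax F) (2 * L * ε) Set.univ C := by
    rw [mul_assoc]
    refine hV.biUnion fun W hW => isSmallCoverOf_refineCover hcont (by positivity)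
      (by nlinarith) hU (hV.1 W hW) fun y hy => card_filter_le_floor hε hL₀ ?_
    exact (hV.2.2 W hW _ (Classical.epsilon_spec ⟨y, hy⟩) y hy).le
  have hUpos := hU.nonempty Set.univ_nonempty
  have hCcard : C.card ≤ V.card * (2 ^ F.card * U.card ^ K) :=
    Finset.card_biUnion_le_card_mul _ _ _ fun W _ => card_refineCover_le _ hUpos _ _
  have hK : (U.card : ℝ) ^ K ≤ (U.card : ℝ) ^ ((F.card : ℝ) / L) := by
    rw [← Real.rpow_natCast]
    exact Real.rpow_le_rpow_of_exponent_le (by exact_mod_cast hUpos.card_pos)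
      (Nat.floor_le (by positivity))
  rw [← hUcard, ← hVcard]
  calc (covNum 𝒳 (dMax F) (2 * L * ε) : ℝ) ≤ C.card := by exact_mod_cast covNum_le_card hC
    _ ≤ V.card * (2 ^ F.card * U.card ^ K) := by exact_mod_cast hCcard
    _ ≤ 2 ^ F.card * (U.card : ℝ) ^ ((F.card : ℝ) / L) * V.card := by
      rw [mul_comm]
      gcongr

/-- Covering-number estimate: with `M = #(𝒳,d,ε)` and `N = #(𝒳,d̄_F,ε)`, one has
`#(𝒳, d_F, 2Lε) ≤ 2^{|F|} M^{|F|/L} N`. -/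
theorem covNum_dMax_le {G 𝒳 : Type*} [Group G] [MulAction G 𝒳]
    [MetricSpace 𝒳] [CompactSpace 𝒳]
    (hcont : ∀ g : G, Continuous fun x : 𝒳 => g • x)
    (F : Finset G) (hF : F.Nonempty) (ε L : ℝ) (hε : 0 < ε) (hL : 1 ≤ L) :
    (covNum 𝒳 (dMax F) (2 * L * ε) : ℝ) ≤
      2 ^ F.card * (covNum 𝒳 dist ε : ℝ) ^ ((F.card : ℝ) / L) *
        (covNum 𝒳 (dBar F) ε : ℝ) :=
  covNum_dMax_le_general hcont F ε L hε hL
end
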